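/- Coxeter's dilogarithm ladder: Li₂(ρ⁶) = 4·Li₂(ρ³) + 3·Li₂(ρ²) − 6·Li₂(ρ) + 7π²/30, where ρ = (√5−1)/2. -/

import Mathlib

/-!
Four classical functional equations of `Li₂` are evaluated at powers of `ρ`, where `ρ² = 1 - ρ`
gives `1 - ρ² = ρ` and `(1 - ρ) / (1 + ρ) = ρ³`: Euler's reflection at `ρ`, Landen's identity at
`ρ²`, the duplication formula at `ρ` and `ρ³`, and Legendre's identity for
`χ₂(x) = (Li₂ x - Li₂ (-x)) / 2` at `ρ`. The ladder is a rational linear combination of these.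
Duplication comes from splitting the series into even and odd terms. Each of the other three
identities holds because its left side has zero derivative, computed from
`x Li₂'(x) = -log (1 - x)`, and tends to the right side as `x → 0⁺`, using `Li₂ 1 = π² / 6`.
-/

/-- The polylogarithm `Li_s(x) = ∑_{n ≥ 1} x^n / n^s` as a real series. -/
noncomputable def Li (s : ℕ) (x : ℝ) : ℝ := ∑' n : ℕ, x ^ (n + 1) / (n + 1 : ℝ) ^ s

open Real Filter Set Topology

lemma summable_one_div_nat_add_one_pow {s : ℕ} (hs : 2 ≤ s) :
    Summable fun n : ℕ => 1 / ((n : ℝ) + 1) ^ s := by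
  simpa using (summable_nat_add_iff 1).2 (Real.summable_one_div_nat_pow.2 hs)

lemma norm_pow_succ_div_le {s n : ℕ} {x : ℝ} (hx : |x| ≤ 1) :
    ‖x ^ (n + 1) / ((n : ℝ) + 1) ^ s‖ ≤ 1 / ((n : ℝ) + 1) ^ s := by
  rw [norm_div, norm_pow, norm_pow, Real.norm_eq_abs, Real.norm_of_nonneg (by positivity)]
  gcongr
  exact pow_le_one₀ (abs_nonneg x) hx

lemma summable_Li {s : ℕ} (hs : 2 ≤ s) {x : ℝ} (hx : |x| ≤ 1) :
    Summable fun n : ℕ => x ^ (n + 1) / ((n : ℝ) + 1) ^ s :=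
  .of_norm_bounded (summable_one_div_nat_add_one_pow hs) fun _ => norm_pow_succ_div_le hx

lemma continuousOn_Li {s : ℕ} (hs : 2 ≤ s) : ContinuousOn (Li s) (Icc (-1) 1) :=
  continuousOn_tsum (fun _ => by fun_prop) (summable_one_div_nat_add_one_pow hs)
    fun _ _ hx => norm_pow_succ_div_le (abs_le.2 hx)

lemma tendsto_Li_comp {s : ℕ} (hs : 2 ≤ s) {α : Type*} {l : Filter α} {g : α → ℝ} {a : ℝ}
    (ha : a ∈ Icc (-1) 1) (hg : Tendsto g l (𝓝 a)) (hgI : ∀ᶠ y in l, g y ∈ Icc (-1) 1) :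
    Tendsto (fun y => Li s (g y)) l (𝓝 (Li s a)) :=
  (continuousOn_Li hs a ha).tendsto.comp (tendsto_nhdsWithin_iff.2 ⟨hg, hgI⟩)

@[simp] lemma Li_apply_zero (s : ℕ) : Li s 0 = 0 := by
  simp [Li]

lemma Li_one {x : ℝ} (hx : |x| < 1) : Li 1 x = -log (1 - x) := by
  simpa [Li] using (hasSum_pow_div_log_of_abs_lt_one hx).tsum_eq

lemma Li_two_one : Li 2 1 = π ^ 2 / 6 := by
  simpa [Li] using ((hasSum_nat_add_iff' 1).2 hasSum_zeta_two).tsum_eq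

lemma hasDerivAt_Li_succ (s : ℕ) {x : ℝ} (hx : |x| < 1) (hx0 : x ≠ 0) :
    HasDerivAt (Li (s + 1)) (Li s x / x) x := by
  obtain ⟨r, hxr, hr1⟩ := exists_between hx
  have hr0 : 0 < r := (abs_nonneg x).trans_lt hxr
  have hterm (n : ℕ) (y : ℝ) : HasDerivAt (fun z : ℝ => z ^ (n + 1) / ((n : ℝ) + 1) ^ (s + 1))
      (y ^ n / ((n : ℝ) + 1) ^ s) y := by
    have hn : (n : ℝ) + 1 ≠ 0 := by positivity
    refine ((hasDerivAt_pow (n + 1) y).div_const _).congr_deriv ?_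
    rw [Nat.add_sub_cancel, pow_succ]
    push_cast
    field_simp
  have hbound (n : ℕ) (y : ℝ) (hy : y ∈ Metric.ball 0 r) :
      ‖y ^ n / ((n : ℝ) + 1) ^ s‖ ≤ r ^ n := by
    rw [mem_ball_zero_iff] at hy
    rw [norm_div, norm_pow, Real.norm_of_nonneg (by positivity : (0 : ℝ) ≤ ((n : ℝ) + 1) ^ s)]
    calc ‖y‖ ^ n / ((n : ℝ) + 1) ^ s ≤ ‖y‖ ^ n :=
          div_le_self (by positivity) (one_le_pow₀ (by simp))
      _ ≤ r ^ n := by gcongr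
  have hLi : HasDerivAt (Li (s + 1)) (∑' n : ℕ, x ^ n / ((n : ℝ) + 1) ^ s) x :=
    hasDerivAt_tsum_of_isPreconnected (summable_geometric_of_lt_one hr0.le hr1)
      Metric.isOpen_ball (convex_ball 0 r).isPreconnected (fun n y _ => hterm n y) hbound
      (Metric.mem_ball_self hr0) (by simp) (mem_ball_zero_iff.2 hxr)
  refine hLi.congr_deriv ?_
  rw [Li, ← tsum_div_const]
  congr 1 with n
  rw [pow_succ]
  field_simp

lemma hasDerivAt_Li_two {x : ℝ} (hx : |x| < 1) (hx0 : x ≠ 0) :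
    HasDerivAt (Li 2) (-log (1 - x) / x) x := by
  simpa [Li_one hx] using hasDerivAt_Li_succ 1 hx hx0

lemma Li_add_Li_neg {s : ℕ} (hs : 2 ≤ s) {x : ℝ} (hx : |x| ≤ 1) :
    Li s x + Li s (-x) = 2 / 2 ^ s * Li s (x ^ 2) := by
  have hx2 : |x ^ 2| ≤ 1 := by rw [abs_pow]; exact pow_le_one₀ (abs_nonneg x) hx
  have hsum : HasSum _ (Li s x + Li s (-x)) :=
    (summable_Li hs hx).hasSum.add (summable_Li hs (x := -x) (by rwa [abs_neg])).hasSum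
  have heven : HasSum (fun k => x ^ (2 * k + 1) / (((2 * k : ℕ) : ℝ) + 1) ^ s
      + (-x) ^ (2 * k + 1) / (((2 * k : ℕ) : ℝ) + 1) ^ s) 0 :=
    hasSum_zero.congr_fun fun k => by rw [Odd.neg_pow ⟨k, rfl⟩]; ring
  have hodd : HasSum (fun k => x ^ (2 * k + 1 + 1) / (((2 * k + 1 : ℕ) : ℝ) + 1) ^ s
      + (-x) ^ (2 * k + 1 + 1) / (((2 * k + 1 : ℕ) : ℝ) + 1) ^ s) (2 / 2 ^ s * Li s (x ^ 2)) := by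
    refine ((summable_Li hs hx2).hasSum.mul_left (2 / 2 ^ s)).congr_fun fun k => ?_
    rw [Even.neg_pow ⟨k + 1, by ring⟩, ← pow_mul, show 2 * k + 1 + 1 = 2 * (k + 1) by ring]
    push_cast
    rw [show 2 * (k : ℝ) + 1 + 1 = 2 * (k + 1) by ring, mul_pow]
    field_simp
    ring
  simpa using hsum.unique (heven.even_add_odd hodd)

lemma Li_two_neg_one : Li 2 (-1) = -(π ^ 2 / 12) := by
  have h := Li_add_Li_neg le_rfl (x := 1) (by norm_num)
  rw [one_pow, Li_two_one] at h
  linarith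

lemma eq_of_hasDerivAt_zero_of_tendsto_nhdsGT {E : Type*} [NormedAddCommGroup E]
    [NormedSpace ℝ E] {f : ℝ → E} {a b x : ℝ} {c : E}
    (hf : ∀ y ∈ Ioo a b, HasDerivAt f 0 y) (hlim : Tendsto f (𝓝[>] a) (𝓝 c))
    (hx : x ∈ Ioo a b) : f x = c := by
  have hconst (y : ℝ) (hy : y ∈ Ioo a b) : f y = f x :=
    isOpen_Ioo.is_const_of_deriv_eq_zero isPreconnected_Ioo
      (fun z hz => (hf z hz).differentiableAt.differentiableWithinAt)
      (fun z hz => (hf z hz).deriv) hy hx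
  refine tendsto_nhds_unique (tendsto_const_nhds.congr' ?_) hlim
  filter_upwards [Ioo_mem_nhdsGT (hx.1.trans hx.2)] with y hy using (hconst y hy).symm

lemma tendsto_log_mul_nhdsGT_zero {g : ℝ → ℝ} {g' : ℝ} (hg : HasDerivAt g g' 0) (hg0 : g 0 = 0) :
    Tendsto (fun y => log y * g y) (𝓝[>] 0) (𝓝 0) := by
  have hlog : Tendsto (fun y => log y * y) (𝓝[>] 0) (𝓝 0) := by
    simpa using tendsto_log_mul_rpow_nhdsGT_zero one_pos
  have hslope : Tendsto (fun y => y⁻¹ * g y) (𝓝[>] 0) (𝓝 g') := by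
    simpa [hg0] using hg.tendsto_slope_zero_right
  have h := hlog.mul hslope
  rw [zero_mul] at h
  refine h.congr' ?_
  filter_upwards [self_mem_nhdsWithin] with y (hy : 0 < y)
  field_simp

lemma Li_two_add_Li_two_one_sub {x : ℝ} (hx : x ∈ Ioo 0 1) :
    Li 2 x + Li 2 (1 - x) + log x * log (1 - x) = π ^ 2 / 6 := by
  refine eq_of_hasDerivAt_zero_of_tendsto_nhdsGT
    (f := fun y => Li 2 y + Li 2 (1 - y) + log y * log (1 - y)) (fun y hy => ?_) ?_ hx
  · obtain ⟨hy0, hy1⟩ := hy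
    have h1y : 0 < 1 - y := sub_pos.2 hy1
    have hsub := (hasDerivAt_id' y).const_sub 1
    have hLi := hasDerivAt_Li_two (abs_lt.2 ⟨by linarith, hy1⟩) hy0.ne'
    have hLi1 := (hasDerivAt_Li_two (abs_lt.2 ⟨by linarith, by linarith⟩) h1y.ne').comp y hsub
    have hlog := (hasDerivAt_log hy0.ne').mul ((hasDerivAt_log h1y.ne').comp y hsub)
    refine ((hLi.add hLi1).add hlog).congr_deriv ?_
    simp only [Function.comp_apply, sub_sub_cancel]
    field_simp
    ring
  · have hI : ∀ᶠ y in 𝓝[>] (0 : ℝ), y ∈ Ioo 0 1 := Ioo_mem_nhdsGT one_pos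
    have hLi : Tendsto (Li 2) (𝓝[>] 0) (𝓝 (Li 2 0)) :=
      tendsto_Li_comp le_rfl (by norm_num) nhdsWithin_le_nhds
        (hI.mono fun y hy => ⟨by linarith [hy.1], hy.2.le⟩)
    have hLi1 : Tendsto (fun y => Li 2 (1 - y)) (𝓝[>] 0) (𝓝 (Li 2 1)) :=
      tendsto_Li_comp le_rfl (by norm_num)
        ((Continuous.tendsto' (by fun_prop) 0 1 (by norm_num)).mono_left nhdsWithin_le_nhds)
        (hI.mono fun y hy => ⟨by linarith [hy.2], by linarith [hy.1]⟩)
    have hlog := tendsto_log_mul_nhdsGT_zero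
      (((hasDerivAt_id' 0).const_sub 1).log (by norm_num)) (by norm_num)
    simpa [Li_two_one] using (hLi.add hLi1).add hlog

lemma Li_two_add_Li_two_neg_div_one_sub {x : ℝ} (hx : x ∈ Ioo 0 (1 / 2)) :
    Li 2 x + Li 2 (-x / (1 - x)) + log (1 - x) ^ 2 / 2 = 0 := by
  refine eq_of_hasDerivAt_zero_of_tendsto_nhdsGT
    (f := fun y => Li 2 y + Li 2 (-y / (1 - y)) + log (1 - y) ^ 2 / 2) (fun y hy => ?_) ?_ hx
  · obtain ⟨hy0, hy2⟩ := hy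
    have h1y : 0 < 1 - y := by linarith
    have hw0 : -y / (1 - y) < 0 := div_neg_of_neg_of_pos (neg_neg_of_pos hy0) h1y
    have hw1 : -1 < -y / (1 - y) := by rw [lt_div_iff₀ h1y]; linarith
    have hsub := (hasDerivAt_id' y).const_sub 1
    have hLi := hasDerivAt_Li_two (abs_lt.2 ⟨by linarith, by linarith⟩) hy0.ne'
    have hLiw := (hasDerivAt_Li_two (abs_lt.2 ⟨hw1, by linarith⟩) hw0.ne).comp y
      ((hasDerivAt_id' y).neg.div hsub h1y.ne')
    have hlog := (((hasDerivAt_log h1y.ne').comp y hsub).pow 2).div_const 2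
    refine ((hLi.add hLiw).add hlog).congr_deriv ?_
    have hw : 1 - -y / (1 - y) = (1 - y)⁻¹ := by field_simp; ring
    simp only [Function.comp_apply, Pi.neg_apply, hw, log_inv]
    field_simp
    ring
  · have hw : Tendsto (fun y : ℝ => -y / (1 - y)) (𝓝[>] 0) (𝓝 0) := by
      have : ContinuousAt (fun y : ℝ => -y / (1 - y)) 0 := by fun_prop (disch := norm_num)
      simpa using this.tendsto.mono_left nhdsWithin_le_nhds
    have hI : Icc (-1 : ℝ) 1 ∈ 𝓝 0 := Icc_mem_nhds (by norm_num) (by norm_num)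
    have hLi : Tendsto (Li 2) (𝓝[>] 0) (𝓝 (Li 2 0)) :=
      tendsto_Li_comp le_rfl (by norm_num) nhdsWithin_le_nhds (nhdsWithin_le_nhds hI)
    have hLiw := tendsto_Li_comp le_rfl (by norm_num) hw (hw hI)
    have hlog : Tendsto (fun y : ℝ => log (1 - y) ^ 2 / 2) (𝓝[>] 0) (𝓝 0) := by
      have : ContinuousAt (fun y : ℝ => log (1 - y) ^ 2 / 2) 0 := by fun_prop (disch := norm_num)
      simpa using this.tendsto.mono_left nhdsWithin_le_nhds
    simpa using (hLi.add hLiw).add hlog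

noncomputable def legendreChi2 (x : ℝ) : ℝ := (Li 2 x - Li 2 (-x)) / 2

lemma legendreChi2_one : legendreChi2 1 = π ^ 2 / 8 := by
  rw [legendreChi2, Li_two_one, Li_two_neg_one]
  ring

lemma hasDerivAt_legendreChi2 {x : ℝ} (hx : |x| < 1) (hx0 : x ≠ 0) :
    HasDerivAt legendreChi2 ((log (1 + x) - log (1 - x)) / (2 * x)) x := by
  have hLi := hasDerivAt_Li_two hx hx0
  have hLineg := (hasDerivAt_Li_two (x := -x) (by rwa [abs_neg]) (neg_ne_zero.2 hx0)).comp x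
    (hasDerivAt_neg x)
  refine ((hLi.sub hLineg).div_const 2).congr_deriv ?_
  rw [sub_neg_eq_add]
  field_simp
  ring

lemma tendsto_legendreChi2_comp {α : Type*} {l : Filter α} {g : α → ℝ} {a : ℝ}
    (ha : a ∈ Icc (-1) 1) (hg : Tendsto g l (𝓝 a)) (hgI : ∀ᶠ y in l, g y ∈ Icc (-1) 1) :
    Tendsto (fun y => legendreChi2 (g y)) l (𝓝 (legendreChi2 a)) := by
  have hneg {b : ℝ} (hb : b ∈ Icc (-1 : ℝ) 1) : -b ∈ Icc (-1 : ℝ) 1 :=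
    ⟨by linarith [hb.2], by linarith [hb.1]⟩
  exact ((tendsto_Li_comp le_rfl ha hg hgI).sub
    (tendsto_Li_comp le_rfl (hneg ha) hg.neg (hgI.mono fun _ => hneg))).div_const 2

lemma legendreChi2_add_legendreChi2_one_sub_div_one_add {x : ℝ} (hx : x ∈ Ioo 0 1) :
    legendreChi2 x + legendreChi2 ((1 - x) / (1 + x)) + log x * log ((1 - x) / (1 + x)) / 2
      = π ^ 2 / 8 := by
  refine eq_of_hasDerivAt_zero_of_tendsto_nhdsGT (f := fun y => legendreChi2 y
    + legendreChi2 ((1 - y) / (1 + y)) + log y * log ((1 - y) / (1 + y)) / 2) (fun y hy => ?_) ?_ hx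
  · obtain ⟨hy0, hy1⟩ := hy
    have h1y : 0 < 1 - y := sub_pos.2 hy1
    have h2y : 0 < 1 + y := by linarith
    have hv0 : 0 < (1 - y) / (1 + y) := div_pos h1y h2y
    have hv1 : (1 - y) / (1 + y) < 1 := (div_lt_one h2y).2 (by linarith)
    have hv := ((hasDerivAt_id' y).const_sub 1).div ((hasDerivAt_id' y).const_add 1) h2y.ne'
    have hχ := hasDerivAt_legendreChi2 (abs_lt.2 ⟨by linarith, hy1⟩) hy0.ne'
    have hχv := (hasDerivAt_legendreChi2 (abs_lt.2 ⟨by linarith, hv1⟩) hv0.ne').comp y hv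
    have hlog := ((hasDerivAt_log hy0.ne').mul ((hasDerivAt_log hv0.ne').comp y hv)).div_const 2
    refine ((hχ.add hχv).add hlog).congr_deriv ?_
    have e1 : log (1 + (1 - y) / (1 + y)) = log 2 - log (1 + y) := by
      rw [show 1 + (1 - y) / (1 + y) = 2 / (1 + y) by field_simp; ring, log_div two_ne_zero h2y.ne']
    have e2 : log (1 - (1 - y) / (1 + y)) = log 2 + log y - log (1 + y) := by
      rw [show 1 - (1 - y) / (1 + y) = 2 * y / (1 + y) by field_simp; ring,
        log_div (by positivity) h2y.ne', log_mul two_ne_zero hy0.ne']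
    simp only [Function.comp_apply, Pi.div_apply, e1, e2, log_div h1y.ne' h2y.ne']
    field_simp
    ring
  · have hI : ∀ᶠ y in 𝓝[>] (0 : ℝ), y ∈ Ioo 0 1 := Ioo_mem_nhdsGT one_pos
    have hv : Tendsto (fun y : ℝ => (1 - y) / (1 + y)) (𝓝[>] 0) (𝓝 1) := by
      have : ContinuousAt (fun y : ℝ => (1 - y) / (1 + y)) 0 := by fun_prop (disch := norm_num)
      simpa using this.tendsto.mono_left nhdsWithin_le_nhds
    have hχ : Tendsto legendreChi2 (𝓝[>] 0) (𝓝 (legendreChi2 0)) :=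
      tendsto_legendreChi2_comp (by norm_num) nhdsWithin_le_nhds
        (hI.mono fun y hy => ⟨by linarith [hy.1], hy.2.le⟩)
    have hχv := tendsto_legendreChi2_comp (by norm_num) hv (hI.mono fun y hy =>
      ⟨by linarith [div_pos (sub_pos.2 hy.2) (by linarith [hy.1] : 0 < 1 + y)],
        (div_le_one (by linarith [hy.1])).2 (by linarith [hy.1])⟩)
    have hlog := (tendsto_log_mul_nhdsGT_zero ((((hasDerivAt_id' 0).const_sub 1).div
      ((hasDerivAt_id' 0).const_add 1) (by norm_num)).log (by norm_num)) (by norm_num)).div_const 2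
    have hχ0 : legendreChi2 0 = 0 := by simp [legendreChi2]
    simpa [hχ0, legendreChi2_one] using (hχ.add hχv).add hlog

theorem Li_two_pow_six_ladder {ρ : ℝ} (hρ0 : 0 < ρ) (hρ : ρ ^ 2 = 1 - ρ) :
    Li 2 (ρ ^ 6) = 4 * Li 2 (ρ ^ 3) + 3 * Li 2 (ρ ^ 2) - 6 * Li 2 ρ + 7 * π ^ 2 / 30 := by
  have hρ1 : ρ < 1 := by nlinarith
  have habs (k : ℕ) : |ρ ^ k| ≤ 1 := by
    rw [abs_of_pos (pow_pos hρ0 k)]; exact pow_le_one₀ hρ0.le hρ1.le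
  have euler := Li_two_add_Li_two_one_sub ⟨hρ0, hρ1⟩
  have landen := Li_two_add_Li_two_neg_div_one_sub (x := ρ ^ 2) ⟨by positivity, by nlinarith⟩
  have dup := Li_add_Li_neg le_rfl (by simpa using habs 1)
  have dup3 := Li_add_Li_neg le_rfl (habs 3)
  have legendre := legendreChi2_add_legendreChi2_one_sub_div_one_add ⟨hρ0, hρ1⟩
  have hcayley : (1 - ρ) / (1 + ρ) = ρ ^ 3 := by
    rw [div_eq_iff (by positivity)]; linear_combination (-ρ ^ 2 - 1) * hρ
  rw [← hρ, log_pow] at euler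
  rw [show 1 - ρ ^ 2 = ρ by linarith, show -ρ ^ 2 / ρ = -ρ by field_simp] at landen
  rw [← pow_mul] at dup3
  rw [hcayley, log_pow, legendreChi2, legendreChi2] at legendre
  push_cast at euler legendre
  linear_combination (22 / 5) * euler - (28 / 5) * landen + (18 / 5) * dup - 2 * dup3 - 4 * legendre

theorem stmt_7 :
    Li 2 (((Real.sqrt 5 - 1) / 2) ^ 6)
      = 4 * Li 2 (((Real.sqrt 5 - 1) / 2) ^ 3) + 3 * Li 2 (((Real.sqrt 5 - 1) / 2) ^ 2)
        - 6 * Li 2 ((Real.sqrt 5 - 1) / 2) + 7 * Real.pi ^ 2 / 30 := by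
  have h5 : Real.sqrt 5 ^ 2 = 5 := Real.sq_sqrt (by norm_num)
  have h1 : 1 < Real.sqrt 5 := by nlinarith [Real.sqrt_nonneg 5]
  exact Li_two_pow_six_ladder (by linarith) (by linear_combination h5 / 4)
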